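/- Let G be a simple undirected graph with maximum degree δ, source s and sink t, in which every vertex and edge lies on an s-t path. If S is a feedback vertex set of size at most 2·OPT_FVS, then S ∪ N(S) is a tracking set of size at most 2(δ+1)·OPT_T, where OPT_T is the minimum size of a tracking set (using that every tracking set is a feedback vertex set, so OPT_FVS ≤ OPT_T). -/

import Mathlib

open SimpleGraph

noncomputable def trackSeq {V : Type} (T : Set V) (l : List V) : List V :=
  l.filter (fun v => @decide (v ∈ T) (Classical.propDecidable _))

/-- `T` is a tracking set for `s`-`t` paths in `G`: distinct `s`-`t` paths have
distinct sequences of `T`-vertices along them. -/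
def IsTrackingSet {V : Type} (G : SimpleGraph V) (s t : V) (T : Set V) : Prop :=
  ∀ p q : G.Walk s t, p.IsPath → q.IsPath →
    trackSeq T p.support = trackSeq T q.support → p = q

/-- Every vertex and every edge of `G` lies on some `s`-`t` path. -/
def Reduced {V : Type} (G : SimpleGraph V) (s t : V) : Prop :=
  (∀ v : V, ∃ p : G.Walk s t, p.IsPath ∧ v ∈ p.support) ∧
  (∀ e ∈ G.edgeSet, ∃ p : G.Walk s t, p.IsPath ∧ e ∈ p.edges)

/-- `S` is a feedback vertex set: every cycle of `G` meets `S`. -/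
def IsFVS {V : Type} (G : SimpleGraph V) (S : Set V) : Prop :=
  ∀ (v : V) (c : G.Walk v v), c.IsCycle → ∃ x ∈ c.support, x ∈ S

/-- The neighbourhood of a set of vertices. -/
def nbhd {V : Type} (G : SimpleGraph V) (S : Set V) : Set V :=
  {v | ∃ u ∈ S, G.Adj u v}

/-!
If two distinct `s`-`t` paths had the same sequence of trackers, we could split both at a common
inner tracker and recurse; once no inner tracker is left, the two paths span a cycle. That cycle
meets the feedback vertex set `S` in some `x`, and `x` with its two neighbours on the cycle are
three trackers of `S ∪ N(S)` on it, while only `s` and `t` are available.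

Conversely, if a cycle `C` avoided a tracking set, an `s`-`t` path through an edge of `C` could be
rerouted, between its first and last vertices on `C`, along either arc of `C`: two distinct paths
with the same trackers. Hence every tracking set is a feedback vertex set, so `OPT_FVS ≤ OPT_T` and
`|S ∪ N(S)| ≤ (δ + 1) |S| ≤ 2 (δ + 1) OPT_T`.
-/

open SimpleGraph.Walk

variable {V : Type} {G : SimpleGraph V}

section trackSeq

variable {T : Set V}

lemma mem_trackSeq {x : V} {l : List V} : x ∈ trackSeq T l ↔ x ∈ l ∧ x ∈ T := by
  simp [trackSeq]

lemma trackSeq_append (l₁ l₂ : List V) :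
    trackSeq T (l₁ ++ l₂) = trackSeq T l₁ ++ trackSeq T l₂ :=
  List.filter_append ..

lemma trackSeq_cons_of_mem {x : V} (hx : x ∈ T) (l : List V) :
    trackSeq T (x :: l) = x :: trackSeq T l := by
  simp [trackSeq, hx]

lemma trackSeq_eq_nil {l : List V} (h : ∀ x ∈ l, x ∉ T) : trackSeq T l = [] := by
  simpa [trackSeq] using h

lemma mem_iff_mem_of_trackSeq_eq {l m : List V} (h : trackSeq T l = trackSeq T m) {x : V}
    (hx : x ∈ T) : x ∈ l ↔ x ∈ m := by
  simpa [mem_trackSeq, hx] using congrArg (x ∈ ·) h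

end trackSeq

namespace SimpleGraph.Walk

variable {u v w : V}

lemma IsPath.append {p : G.Walk u v} {q : G.Walk v w} (hp : p.IsPath) (hq : q.IsPath)
    (h : ∀ x ∈ p.support, x ∈ q.support → x = v) : (p.append q).IsPath := by
  have hv : v ∉ p.support.dropLast := by
    have := hp.support_nodup
    rw [← dropLast_support_concat p, List.nodup_append] at this
    exact fun hv => this.2.2 v hv v (List.mem_singleton_self v) rfl
  rw [isPath_def, support_append_eq_support_dropLast_append, List.nodup_append]
  refine ⟨hp.support_nodup.sublist (List.dropLast_sublist _), hq.support_nodup, ?_⟩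
  rintro x hxp _ hxq rfl
  exact hv (h x (List.dropLast_subset _ hxp) hxq ▸ hxp)

lemma trackSeq_eq_of_append {T : Set V} (hT : v ∈ T) {A₁ A₂ : G.Walk u v} {B₁ B₂ : G.Walk v w}
    (hp : (A₁.append B₁).IsPath)
    (h : trackSeq T (A₁.append B₁).support = trackSeq T (A₂.append B₂).support) :
    trackSeq T A₁.support = trackSeq T A₂.support ∧
      trackSeq T B₁.support = trackSeq T B₂.support := by
  have split : ∀ (A : G.Walk u v) (B : G.Walk v w), trackSeq T (A.append B).support =
      trackSeq T A.support.dropLast ++ v :: trackSeq T B.support.tail := fun A B => by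
    rw [support_append_eq_support_dropLast_append, ← cons_tail_support B, trackSeq_append,
      trackSeq_cons_of_mem hT, List.tail_cons]
  have hnd := hp.support_nodup
  rw [support_append_eq_support_dropLast_append, ← cons_tail_support B₁, List.nodup_append] at hnd
  rw [split, split, List.append_cons_inj_of_notMem
    (fun hv => hnd.2.2 v (mem_trackSeq.1 hv).1 v List.mem_cons_self rfl)
    (fun hv => (List.nodup_cons.1 hnd.2.1).1 (mem_trackSeq.1 hv).1)] at h
  constructor
  · rw [← dropLast_support_concat A₁, ← dropLast_support_concat A₂, trackSeq_append,
      trackSeq_append, h.1]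
  · rw [← cons_tail_support B₁, ← cons_tail_support B₂, trackSeq_cons_of_mem hT,
      trackSeq_cons_of_mem hT, h.2.2]

variable [DecidableEq V]

lemma exists_first_mem (W : Set V) (p : G.Walk u v) (h : ∃ x ∈ p.support, x ∈ W) :
    ∃ a, ∃ ha : a ∈ p.support, a ∈ W ∧ ∀ x ∈ (p.takeUntil a ha).support, x ∈ W → x = a := by
  induction p with
  | @nil u =>
    obtain ⟨x, hx, hxW⟩ := h
    rw [mem_support_nil_iff] at hx
    subst hx
    exact ⟨x, start_mem_support _, hxW, by simp⟩
  | @cons u _ _ hadj p ih =>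
    by_cases hu : u ∈ W
    · exact ⟨u, start_mem_support _, hu, by simp⟩
    obtain ⟨x, hx, hxW⟩ := h
    have hxp : x ∈ p.support := (List.mem_cons.1 hx).resolve_left fun h => hu (h ▸ hxW)
    obtain ⟨a, ha, haW, hfirst⟩ := ih ⟨x, hxp, hxW⟩
    have hua : u ≠ a := fun h => hu (h ▸ haW)
    refine ⟨a, List.mem_cons_of_mem _ ha, haW, ?_⟩
    rw [takeUntil_cons ha hua]
    simpa [hu] using hfirst

lemma IsCycle.exists_isPath_ne {c : G.Walk v v} (hc : c.IsCycle) {a b : V}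
    (ha : a ∈ c.support) (hb : b ∈ c.support) (hab : a ≠ b) :
    ∃ r₁ r₂ : G.Walk a b, r₁.IsPath ∧ r₂.IsPath ∧ r₁ ≠ r₂ ∧
      r₁.support ⊆ c.support ∧ r₂.support ⊆ c.support := by
  set c' := c.rotate a ha
  have hc' : c'.IsCycle := hc.rotate ha
  have hb' : b ∈ c'.support := (mem_support_rotate_iff c a ha).2 hb
  have hsplit := take_spec c' hb'
  have htake : ¬ (c'.takeUntil b hb').Nil := fun h => hab h.eq
  have hdrop : ¬ (c'.dropUntil b hb').Nil := fun h => hab h.eq.symm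
  refine ⟨c'.takeUntil b hb', (c'.dropUntil b hb').reverse, hc'.isPath_takeUntil hb',
    (IsCycle.isPath_of_append_right htake (by rwa [hsplit])).reverse, ?_, ?_, ?_⟩
  · intro h
    have hnd := hc'.edges_nodup
    rw [← hsplit, edges_append, h, edges_reverse, List.nodup_append] at hnd
    obtain ⟨e, he⟩ := List.exists_mem_of_ne_nil _ (edges_eq_nil.not.2 hdrop)
    exact hnd.2.2 e (List.mem_reverse.2 he) e he rfl
  · exact fun x hx => (mem_support_rotate_iff c a ha).1 (support_takeUntil_subset_support _ _ hx)
  · intro x hx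
    rw [support_reverse, List.mem_reverse] at hx
    exact (mem_support_rotate_iff c a ha).1 (support_dropUntil_subset_support _ _ hx)

lemma IsPath.exists_entry_exit {p : G.Walk u v} (hp : p.IsPath) {W : Set V} {x y : V}
    (hx : x ∈ p.support) (hy : y ∈ p.support) (hxW : x ∈ W) (hyW : y ∈ W) (hxy : x ≠ y) :
    ∃ (a b : V) (front : G.Walk u a) (back : G.Walk b v), front.IsPath ∧ back.IsPath ∧
      a ≠ b ∧ a ∈ W ∧ b ∈ W ∧ (∀ z ∈ front.support, z ∈ W → z = a) ∧
      (∀ z ∈ back.support, z ∈ W → z = b) ∧ ∀ z ∈ front.support, z ∉ back.support := by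
  obtain ⟨a, ha, haW, hfront⟩ := exists_first_mem W p ⟨x, hx, hxW⟩
  set mid := p.dropUntil a ha
  obtain ⟨b, hb, hbW, hback⟩ := exists_first_mem W mid.reverse ⟨a, by simp, haW⟩
  set back := (mid.reverse.takeUntil b hb).reverse
  have hp' : ((p.takeUntil a ha).append mid).IsPath := by rwa [take_spec]
  have hback' : ∀ z ∈ back.support, z ∈ W → z = b := fun z hz =>
    hback z (by simpa [back] using hz)
  have hab : a ≠ b := by
    rintro rfl
    have hmid : mid = back := by
      have hnil := eq_nil_iff_nil.2
        (isPath_iff_nil.1 ((hp.dropUntil ha).reverse.dropUntil hb).reverse)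
      rw [← reverse_reverse mid, ← take_spec mid.reverse hb, reverse_append, hnil, nil_append]
    have hW : ∀ z ∈ p.support, z ∈ W → z = a := by
      intro z hz hzW
      rw [← take_spec p ha, mem_support_append_iff] at hz
      exact hz.elim (hfront z · hzW) fun hz => hback' z (hmid ▸ hz) hzW
    exact hxy ((hW x hx hxW).trans (hW y hy hyW).symm)
  refine ⟨a, b, p.takeUntil a ha, back, hp.takeUntil ha,
    ((hp.dropUntil ha).reverse.takeUntil hb).reverse, hab, haW, hbW, hfront, hback', ?_⟩
  intro z hzf hzb
  have hzmid : z ∈ mid.support := by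
    simpa [back] using support_takeUntil_subset_support _ hb (by simpa [back] using hzb)
  have hza : z = a := of_not_not fun hza => hp'.ne_of_mem_support_of_append hza hzf hzmid rfl
  exact hab (hback' a (hza ▸ hzb) haW)

end SimpleGraph.Walk

lemma IsFVS.exists_mem_support_ne {S T : Set V} (hS : IsFVS G S) (hST : S ⊆ T)
    (hNT : nbhd G S ⊆ T) {v : V} {c : G.Walk v v} (hc : c.IsCycle) (a b : V) :
    ∃ x ∈ c.support, x ∈ T ∧ x ≠ a ∧ x ≠ b := by
  classical
  obtain ⟨x, hx, hxS⟩ := hS v c hc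
  set c' := c.rotate x hx
  have hc' : c'.IsCycle := hc.rotate hx
  have hmem : ∀ {y}, y ∈ c'.support → y ∈ c.support := (mem_support_rotate_iff c x hx).1
  have hT : ∀ {y}, G.Adj x y → y ∈ T := fun hy => hNT ⟨x, hxS, hy⟩
  have h₁ : G.Adj x c'.snd := c'.adj_snd hc'.not_nil
  have h₂ : G.Adj x c'.penultimate := (c'.adj_penultimate hc'.not_nil).symm
  have h₁₂ := hc'.snd_ne_penultimate
  have hy₁ : c'.snd ∈ c.support := hmem (c'.getVert_mem_support _)
  have hy₂ : c'.penultimate ∈ c.support := hmem (c'.getVert_mem_support _)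
  generalize c'.snd = y₁ at *
  generalize c'.penultimate = y₂ at *
  by_contra! h
  have hx' := h x hx (hST hxS)
  have hy₁' := h y₁ hy₁ (hT h₁)
  have hy₂' := h y₂ hy₂ (hT h₂)
  rcases eq_or_ne x a with rfl | hxa
  · exact h₁₂ ((hy₁' h₁.ne').trans (hy₂' h₂.ne').symm)
  · obtain rfl := hx' hxa
    exact h₁₂ ((of_not_not fun hy => h₁.ne' (hy₁' hy)).trans
      (of_not_not fun hy => h₂.ne' (hy₂' hy)).symm)

theorem IsFVS.isTrackingSet {S T : Set V} (hS : IsFVS G S) (hST : S ⊆ T)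
    (hNT : nbhd G S ⊆ T) (s t : V) : IsTrackingSet G s t T := by
  classical
  intro p q hp hq hpq
  induction hn : p.length using Nat.strong_induction_on generalizing s t with
  | _ n ih => ?_
  by_cases hz : ∃ z ∈ p.support, z ∈ T ∧ z ≠ s ∧ z ≠ t
  · obtain ⟨z, hzp, hzT, hzs, hzt⟩ := hz
    have hzq : z ∈ q.support := (mem_iff_mem_of_trackSeq_eq hpq hzT).1 hzp
    obtain ⟨h₁, h₂⟩ := trackSeq_eq_of_append (A₁ := p.takeUntil z hzp) (B₁ := p.dropUntil z hzp)
      (A₂ := q.takeUntil z hzq) (B₂ := q.dropUntil z hzq) hzT (by rwa [take_spec])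
      (by rwa [take_spec, take_spec])
    have e₁ := ih _ (hn ▸ length_takeUntil_lt_length hzp hzt) _ _ _ _
      (hp.takeUntil hzp) (hq.takeUntil hzq) h₁ rfl
    have e₂ := ih _ (hn ▸ length_dropUntil_lt_length hzp hzs) _ _ _ _
      (hp.dropUntil hzp) (hq.dropUntil hzq) h₂ rfl
    rw [← take_spec p hzp, ← take_spec q hzq, e₁, e₂]
  · by_contra hne
    obtain ⟨w, -, -, c, hc, hsub⟩ := hp.exists_isCycle_sublist_of_ne hq hne
    obtain ⟨x, hxc, hxT, hxs, hxt⟩ := hS.exists_mem_support_ne hST hNT hc s t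
    refine hz ⟨x, ?_, hxT, hxs, hxt⟩
    rcases List.mem_append.1 (hsub.subset hxc) with hx | hx
    · exact hx
    · exact (mem_iff_mem_of_trackSeq_eq hpq hxT).2
        (by simpa using List.mem_of_mem_tail hx)

theorem IsTrackingSet.isFVS {s t : V} {T : Set V}
    (hred : ∀ e ∈ G.edgeSet, ∃ p : G.Walk s t, p.IsPath ∧ e ∈ p.edges)
    (hT : IsTrackingSet G s t T) : IsFVS G T := by
  classical
  intro v c hc
  by_contra! hcT
  obtain ⟨p, hp, hep⟩ := hred _ (c.edges_subset_edgeSet (c.mk_start_snd_mem_edges hc.not_nil))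
  obtain ⟨a, b, front, back, hfront, hback, hab, haC, hbC, hfrontC, hbackC, hdisj⟩ :=
    hp.exists_entry_exit (W := {x | x ∈ c.support}) (p.fst_mem_support_of_mem_edges hep)
      (p.snd_mem_support_of_mem_edges hep) c.start_mem_support (c.getVert_mem_support 1)
      (c.adj_snd hc.not_nil).ne
  obtain ⟨r₁, r₂, hr₁, hr₂, hne, hr₁c, hr₂c⟩ := hc.exists_isPath_ne haC hbC hab
  have hsplice : ∀ r : G.Walk a b, r.IsPath → r.support ⊆ c.support →
      (front.append (r.append back)).IsPath ∧
      trackSeq T (front.append (r.append back)).support =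
        trackSeq T front.support ++ trackSeq T back.support.tail := by
    intro r hr hrc
    refine ⟨hfront.append (hr.append hback fun z hzr hzb => hbackC z hzb (hrc hzr)) ?_, ?_⟩
    · intro z hzf hz
      rcases (mem_support_append_iff _ _).1 hz with hzr | hzb
      · exact hfrontC z hzf (hrc hzr)
      · exact absurd hzb (hdisj z hzf)
    · rw [support_append, tail_support_append, trackSeq_append, trackSeq_append,
        trackSeq_eq_nil fun z hz => hcT z (hrc (List.mem_of_mem_tail hz)), List.nil_append]
  obtain ⟨hp₁, hs₁⟩ := hsplice r₁ hr₁ hr₁c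
  obtain ⟨hp₂, hs₂⟩ := hsplice r₂ hr₂ hr₂c
  have h := congrArg edges (hT _ _ hp₁ hp₂ (hs₁.trans hs₂.symm))
  simp only [edges_append, List.append_cancel_left_eq, List.append_cancel_right_eq] at h
  exact hne (edges_injective h)

lemma ncard_union_nbhd_le {S : Set V} (hS : S.Finite) {δ : ℕ}
    (hdeg : ∀ v : V, (G.neighborSet v).ncard ≤ δ) :
    (S ∪ nbhd G S).ncard ≤ (δ + 1) * S.ncard := by
  have hN : nbhd G S = ⋃ u ∈ hS.toFinset, G.neighborSet u := by
    ext v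
    simp [nbhd]
  have hcard : (nbhd G S).ncard ≤ δ * S.ncard := by
    rw [hN, Set.ncard_eq_toFinset_card S hS, mul_comm]
    calc (⋃ u ∈ hS.toFinset, G.neighborSet u).ncard
        ≤ ∑ u ∈ hS.toFinset, (G.neighborSet u).ncard := Finset.set_ncard_biUnion_le _ _
      _ ≤ hS.toFinset.card * δ := Finset.sum_le_card_nsmul _ _ _ fun u _ => hdeg u
  calc (S ∪ nbhd G S).ncard ≤ S.ncard + (nbhd G S).ncard := Set.ncard_union_le _ _
    _ ≤ (δ + 1) * S.ncard := by linarith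

theorem stmt9 {V : Type} [Fintype V] (G : SimpleGraph V) (s t : V) (δ : ℕ)
    (hdeg : ∀ v : V, (G.neighborSet v).ncard ≤ δ)
    (hred : Reduced G s t) (S : Set V) (hS : IsFVS G S)
    (happrox : ∀ F : Set V, IsFVS G F → S.ncard ≤ 2 * F.ncard) :
    IsTrackingSet G s t (S ∪ nbhd G S) ∧
    ∀ T' : Set V, IsTrackingSet G s t T' →
      (S ∪ nbhd G S).ncard ≤ 2 * (δ + 1) * T'.ncard := by
  refine ⟨hS.isTrackingSet Set.subset_union_left Set.subset_union_right s t,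
    fun T' hT' => ?_⟩
  calc (S ∪ nbhd G S).ncard ≤ (δ + 1) * S.ncard := ncard_union_nbhd_le S.toFinite hdeg
    _ ≤ (δ + 1) * (2 * T'.ncard) := Nat.mul_le_mul_left _ (happrox T' (hT'.isFVS hred.2))
    _ = 2 * (δ + 1) * T'.ncard := by ring
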